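/- arXiv:2204.01118 — 6 statements merged into one kernel-verified Lean document; each statement's English description precedes it below -/
import Mathlib

section
/- Let 1 ≤ p < ∞ and let f : ℝ → ℝ be a Borel function. Then f maps L^p(ℝⁿ) into itself by composition (i.e., f ∘ g ∈ L^p for all g ∈ L^p) if and only if there exists c > 0 such that |f(t)| ≤ c|t| for all t ∈ ℝ. -/
open MeasureTheory ENNReal

/-- Let `1 ≤ p < ∞` and let `f : ℝ → ℝ` be a Borel function. Then `f` maps
`L^p(ℝⁿ)` into itself by composition iff there exists `c > 0` with `|f t| ≤ c * |t|` for all `t`. -/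
theorem lp_composition_iff_linear_bound (n : ℕ) (hn : 0 < n) (p : ℝ) (hp : 1 ≤ p)
    (f : ℝ → ℝ) (hf : Measurable f) :
    (∀ g : (Fin n → ℝ) → ℝ, MemLp g (ENNReal.ofReal p) volume →
      MemLp (f ∘ g) (ENNReal.ofReal p) volume) ↔
    ∃ c > 0, ∀ t : ℝ, |f t| ≤ c * |t| := by
  have hp0 : (0:ℝ) < p := lt_of_lt_of_le one_pos hp
  have hq0 : ENNReal.ofReal p ≠ 0 := by simp [ENNReal.ofReal_eq_zero, not_le, hp0]
  have hqt : ENNReal.ofReal p ≠ ⊤ := ENNReal.ofReal_ne_top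
  have hqr : (ENNReal.ofReal p).toReal = p := ENNReal.toReal_ofReal hp0.le
  constructor
  · intro H
    -- the volume of the whole space is infinite
    have huniv : (volume : Measure (Fin n → ℝ)) Set.univ = ⊤ := by
      rw [volume_pi, Measure.pi_univ]
      simp only [Real.volume_univ, Finset.prod_const, Finset.card_univ, Fintype.card_fin]
      exact ENNReal.top_pow hn.ne'
    have hμ0 : (volume : Measure (Fin n → ℝ)) ≠ 0 := by
      intro h; rw [h] at huniv; simp at huniv
    -- f 0 = 0
    have hf0 : f 0 = 0 := by
      by_contra h0
      have h := (H 0 MemLp.zero).2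
      have hcomp : (f ∘ (0 : (Fin n → ℝ) → ℝ)) = fun _ => f 0 := rfl
      rw [hcomp, eLpNorm_const _ hq0 hμ0, huniv, hqr,
        ENNReal.top_rpow_of_pos (by positivity), ENNReal.mul_top (by simpa using h0)] at h
      exact (lt_irrefl _ h).elim
    by_contra hcon
    push_neg at hcon
    have ht' : ∀ k : ℕ, ∃ u : ℝ, ((k:ℝ)+1) * |u| < |f u| := fun k => hcon _ (by positivity)
    choose t ht using ht'
    have htk0 : ∀ k, t k ≠ 0 := by
      intro k h
      have := ht k
      rw [h] at this
      simp [hf0] at this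
    have hfk : ∀ k, 0 < |f (t k)| := by
      intro k
      refine lt_of_le_of_lt ?_ (ht k)
      positivity
    have hfkp : ∀ k, 0 < |f (t k)| ^ p := fun k => Real.rpow_pos_of_pos (hfk k) p
    set a : ℕ → ℝ := fun k => 1 / (((k:ℝ)+1) * |f (t k)| ^ p) with ha_def
    have ha : ∀ k, 0 < a k := by
      intro k
      have := hfkp k
      positivity
    set s : ℕ → ℝ := fun k => ∑ j ∈ Finset.range k, a j with hs_def
    have hs : StrictMono s := by
      apply strictMono_nat_of_lt_succ
      intro k
      simp only [hs_def, Finset.sum_range_succ]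
      exact lt_add_of_pos_right _ (ha k)
    set i0 : Fin n := ⟨0, hn⟩ with hi0
    set A : ℕ → Set (Fin n → ℝ) :=
      fun k => Set.univ.pi fun i => if i = i0 then Set.Ico (s k) (s (k+1)) else Set.Ico 0 1
      with hA_def
    have hA : ∀ k, MeasurableSet (A k) := by
      intro k
      exact MeasurableSet.univ_pi fun i => by split <;> exact measurableSet_Ico
    have hvol : ∀ k, volume (A k) = ENNReal.ofReal (a k) := by
      intro k
      rw [hA_def]
      rw [volume_pi_pi]
      rw [Finset.prod_eq_single i0]
      · simp only [if_pos rfl, Real.volume_Ico]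
        congr 1
        simp [hs_def, Finset.sum_range_succ]
      · intro b _ hb
        simp [if_neg hb]
      · simp
    have hmemA : ∀ k x, x ∈ A k → x i0 ∈ Set.Ico (s k) (s (k+1)) := by
      intro k x hx
      have := (Set.mem_univ_pi.mp hx) i0
      simpa using this
    have hdis : ∀ k l, k ≠ l → ∀ x, x ∈ A k → x ∈ A l → False := by
      have key : ∀ k l, k < l → ∀ x, x ∈ A k → x ∈ A l → False := by
        intro k l hkl x hxk hxl
        have h1 := hmemA k x hxk
        have h2 := hmemA l x hxl
        have h3 : s (k+1) ≤ s l := hs.monotone hkl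
        have := h1.2
        have := h2.1
        linarith
      intro k l hkl x hxk hxl
      rcases hkl.lt_or_gt with h | h
      · exact key k l h x hxk hxl
      · exact key l k h x hxl hxk
    set g : (Fin n → ℝ) → ℝ := fun x => ∑' k, (A k).indicator (fun _ => t k) x with hg_def
    have hsumm : ∀ x, Summable (fun k => (A k).indicator (fun _ => t k) x) := by
      intro x
      by_cases hx : ∃ k, x ∈ A k
      · obtain ⟨k, hk⟩ := hx
        apply summable_of_ne_finset_zero (s := {k})
        intro b hb
        simp only [Finset.mem_singleton] at hb
        have : x ∉ A b := fun h => hdis b k hb x h hk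
        simp [Set.indicator_of_notMem this]
      · apply summable_of_ne_finset_zero (s := ∅)
        intro b _
        have : x ∉ A b := fun h => hx ⟨b, h⟩
        simp [Set.indicator_of_notMem this]
    have hgmem : ∀ k x, x ∈ A k → g x = t k := by
      intro k x hx
      rw [show g x = ∑' k, (A k).indicator (fun _ => t k) x from rfl]
      have h1 : ∀ b, b ≠ k → (A b).indicator (fun _ => t b) x = 0 := by
        intro b hb
        have : x ∉ A b := fun h => hdis b k hb x h hx
        simp [Set.indicator_of_notMem this]
      rw [tsum_eq_single k h1]
      simp [Set.indicator_of_mem hx]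
    have hgnot : ∀ x, x ∉ (⋃ k, A k) → g x = 0 := by
      intro x hx
      have h1 : ∀ k, (A k).indicator (fun _ => t k) x = 0 := by
        intro k
        have : x ∉ A k := fun h => hx (Set.mem_iUnion.mpr ⟨k, h⟩)
        simp [Set.indicator_of_notMem this]
      simp [hg_def, h1]
    have hgm : Measurable g := by
      apply measurable_of_tendsto_metrizable
        (f := fun m x => ∑ k ∈ Finset.range m, (A k).indicator (fun _ => t k) x)
      · intro m
        exact Finset.measurable_sum _ fun k _ => measurable_const.indicator (hA k)
      · rw [tendsto_pi_nhds]
        intro x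
        exact (hsumm x).hasSum.tendsto_sum_nat
    -- key integral computation
    have key : ∀ (v : ℕ → ℝ) (w : (Fin n → ℝ) → ℝ), (∀ k x, x ∈ A k → w x = v k) →
        (∀ x, x ∉ (⋃ k, A k) → w x = 0) →
        ∫⁻ x, (‖w x‖₊ : ℝ≥0∞) ^ p = ∑' k, ENNReal.ofReal (|v k| ^ p * a k) := by
      intro v w hw hw0
      have hpt : ∀ x, (‖w x‖₊ : ℝ≥0∞) ^ p
          = ∑' k, (A k).indicator (fun _ => ENNReal.ofReal (|v k| ^ p)) x := by
        intro x
        by_cases hx : ∃ k, x ∈ A k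
        · obtain ⟨k, hk⟩ := hx
          have h1 : ∀ b, b ≠ k → (A b).indicator (fun _ => ENNReal.ofReal (|v b| ^ p)) x = 0 := by
            intro b hb
            have : x ∉ A b := fun h => hdis b k hb x h hk
            simp [Set.indicator_of_notMem this]
          rw [tsum_eq_single k h1, Set.indicator_of_mem hk, hw k x hk,
            ← enorm_eq_nnnorm, ← ofReal_norm, ENNReal.ofReal_rpow_of_nonneg (norm_nonneg _) hp0.le,
            Real.norm_eq_abs]
        · have hx' : x ∉ ⋃ k, A k := by
            intro h
            obtain ⟨k, hk⟩ := Set.mem_iUnion.mp h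
            exact hx ⟨k, hk⟩
          have h1 : ∀ k, (A k).indicator (fun _ => ENNReal.ofReal (|v k| ^ p)) x = 0 := by
            intro k
            have : x ∉ A k := fun h => hx ⟨k, h⟩
            simp [Set.indicator_of_notMem this]
          rw [hw0 x hx']
          simp [h1, ENNReal.zero_rpow_of_pos hp0]
      calc ∫⁻ x, (‖w x‖₊ : ℝ≥0∞) ^ p
          = ∫⁻ x, ∑' k, (A k).indicator (fun _ => ENNReal.ofReal (|v k| ^ p)) x :=
            lintegral_congr hpt
        _ = ∑' k, ∫⁻ x, (A k).indicator (fun _ => ENNReal.ofReal (|v k| ^ p)) x :=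
            lintegral_tsum fun k => (measurable_const.indicator (hA k)).aemeasurable
        _ = ∑' k, ENNReal.ofReal (|v k| ^ p) * volume (A k) :=
            tsum_congr fun k => lintegral_indicator_const (hA k) _
        _ = ∑' k, ENNReal.ofReal (|v k| ^ p * a k) :=
            tsum_congr fun k => by rw [hvol k, ← ENNReal.ofReal_mul (by positivity)]
    -- g is in L^p
    have hb : ∀ k : ℕ, |t k| ^ p * a k ≤ 1 / (((k:ℝ)+1) * ((k:ℝ)+1)) := by
      intro k
      have h1 : ((k:ℝ)+1) * |t k| ≤ |f (t k)| := (ht k).le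
      have hk1 : (1:ℝ) ≤ (k:ℝ)+1 := by
        have : (0:ℝ) ≤ (k:ℝ) := Nat.cast_nonneg k
        linarith
      have h2 : ((k:ℝ)+1) * |t k| ^ p ≤ |f (t k)| ^ p := by
        calc ((k:ℝ)+1) * |t k| ^ p ≤ ((k:ℝ)+1) ^ p * |t k| ^ p := by
              apply mul_le_mul_of_nonneg_right _ (by positivity)
              calc ((k:ℝ)+1) = ((k:ℝ)+1) ^ (1:ℝ) := (Real.rpow_one _).symm
                _ ≤ ((k:ℝ)+1) ^ p := Real.rpow_le_rpow_of_exponent_le hk1 hp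
          _ = (((k:ℝ)+1) * |t k|) ^ p := (Real.mul_rpow (by positivity) (abs_nonneg _)).symm
          _ ≤ |f (t k)| ^ p := Real.rpow_le_rpow (by positivity) h1 hp0.le
      have h3 : (0:ℝ) < ((k:ℝ)+1) := by positivity
      have h4 := hfkp k
      rw [ha_def]
      rw [mul_one_div, div_le_div_iff₀ (by positivity) (by positivity)]
      nlinarith [h2, abs_nonneg (t k), Real.rpow_nonneg (abs_nonneg (t k)) p]
    have hsum2 : Summable (fun k : ℕ => 1 / (((k:ℝ)+1) * ((k:ℝ)+1))) := by
      have h1 : Summable (fun k : ℕ => 1 / ((k:ℝ)+1) ^ 2) := by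
        have h2 : Summable (fun k : ℕ => 1 / ((k:ℕ):ℝ) ^ 2) :=
          Real.summable_one_div_nat_pow.mpr one_lt_two
        have h3 := (summable_nat_add_iff (f := fun k : ℕ => 1 / ((k:ℕ):ℝ) ^ 2) 1).mpr h2
        exact h3.congr fun k => by push_cast; ring
      exact h1.congr fun k => by ring_nf
    have hgLp : MemLp g (ENNReal.ofReal p) volume := by
      refine ⟨hgm.aestronglyMeasurable, ?_⟩
      rw [eLpNorm_eq_lintegral_rpow_enorm_toReal hq0 hqt, hqr]
      simp only [enorm_eq_nnnorm]
      rw [key t g hgmem hgnot]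
      apply ENNReal.rpow_lt_top_of_nonneg (by positivity)
      have hle : ∑' k, ENNReal.ofReal (|t k| ^ p * a k)
          ≤ ∑' k : ℕ, ENNReal.ofReal (1 / (((k:ℝ)+1) * ((k:ℝ)+1))) :=
        ENNReal.tsum_le_tsum fun k => ENNReal.ofReal_le_ofReal (hb k)
      rw [← ENNReal.ofReal_tsum_of_nonneg (fun k => by positivity) hsum2] at hle
      exact (lt_of_le_of_lt hle ENNReal.ofReal_lt_top).ne
    -- but f ∘ g is not in L^p : contradiction
    have hw : ∀ k x, x ∈ A k → (f ∘ g) x = f (t k) := by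
      intro k x hx
      simp [Function.comp, hgmem k x hx]
    have hw0 : ∀ x, x ∉ (⋃ k, A k) → (f ∘ g) x = 0 := by
      intro x hx
      simp [Function.comp, hgnot x hx, hf0]
    have h2 := (H g hgLp).2
    rw [eLpNorm_eq_lintegral_rpow_enorm_toReal hq0 hqt, hqr] at h2
    simp only [enorm_eq_nnnorm] at h2
    rw [key (fun k => f (t k)) (f ∘ g) hw hw0] at h2
    have h_harm : ¬ Summable (fun k : ℕ => 1 / ((k:ℝ)+1)) := by
      intro h
      apply Real.not_summable_one_div_natCast
      exact (summable_nat_add_iff 1).mp (h.congr fun k => by push_cast; ring)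
    have hsum : ∑' k, ENNReal.ofReal (|f (t k)| ^ p * a k) = ⊤ := by
      have heq : ∀ k : ℕ, |f (t k)| ^ p * a k = 1 / ((k:ℝ)+1) := by
        intro k
        have h4 := (hfkp k).ne'
        have h3 : ((k:ℝ)+1) ≠ 0 := by positivity
        rw [ha_def]
        field_simp
      by_contra hne
      have h5 := ENNReal.summable_toReal hne
      have h6 : Summable (fun k : ℕ => 1 / ((k:ℝ)+1)) := by
        apply h5.congr
        intro k
        rw [heq k, ENNReal.toReal_ofReal (by positivity)]
      exact h_harm h6
    rw [hsum, ENNReal.top_rpow_of_pos (by positivity)] at h2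
    exact (lt_irrefl _ h2).elim
  · rintro ⟨c, hc, hbound⟩ g hg
    refine MemLp.of_le_mul (c := c) hg
      (hf.comp_aemeasurable hg.1.aemeasurable).aestronglyMeasurable ?_
    filter_upwards with x
    simpa [Real.norm_eq_abs] using hbound (g x)
end

section
/- Let (X, μ) be a measure space containing a measurable set A with 0 < μ(A) < ∞, let 1 ≤ p ≤ ∞, and let f : ℝ → ℝ be such that g ↦ f ∘ g maps L^p(X, μ) to itself. If the composition operator T_f : L^p(X,μ) → L^p(X,μ) is continuous, then f is continuous. -/
open MeasureTheory Filter ENNReal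

/-- Let `(X, μ)` be a measure space containing a measurable set `A` with
`0 < μ A < ∞`, let `1 ≤ p ≤ ∞`, and let `f : ℝ → ℝ` be such that `g ↦ f ∘ g` maps `L^p(X, μ)`
to itself. If the composition operator `T_f` is continuous on `L^p(X, μ)` (here expressed
sequentially: `gⱼ → g` in `L^p` implies `f ∘ gⱼ → f ∘ g` in `L^p`), then `f` is continuous. -/
theorem continuous_of_composition_continuous_Lp
    {X : Type*} [MeasurableSpace X] (μ : Measure X)
    (A : Set X) (hA : MeasurableSet A) (hA0 : 0 < μ A) (hAfin : μ A < ⊤)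
    (p : ℝ≥0∞) (hp : 1 ≤ p) (f : ℝ → ℝ)
    (hact : ∀ g : X → ℝ, MemLp g p μ → MemLp (f ∘ g) p μ)
    (hcont : ∀ (g : X → ℝ) (gj : ℕ → X → ℝ), MemLp g p μ → (∀ j, MemLp (gj j) p μ) →
      Tendsto (fun j => eLpNorm (gj j - g) p μ) atTop (nhds 0) →
      Tendsto (fun j => eLpNorm (f ∘ gj j - f ∘ g) p μ) atTop (nhds 0)) :
    Continuous f := by
  have hp0 : p ≠ 0 := fun h => by simp [h] at hp
  set C : ℝ≥0∞ := μ A ^ (1 / p.toReal) with hC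
  have hC0 : C ≠ 0 := by
    simp only [hC]
    exact (ENNReal.rpow_pos hA0 hAfin.ne).ne'
  have hCtop : C ≠ ⊤ := by
    simp only [hC]
    exact (ENNReal.rpow_lt_top_of_nonneg (by positivity) hAfin.ne).ne
  -- norm of constant-on-A indicators
  have hnorm : ∀ c : ℝ, eLpNorm (A.indicator fun _ => c) p μ = ‖c‖₊ * C :=
    fun c => eLpNorm_indicator_const' hA hA0.ne' hp0
  rw [continuous_iff_continuousAt]
  intro x
  rw [ContinuousAt, tendsto_iff_seq_tendsto]
  intro u hu
  -- the L^p functions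
  set g : X → ℝ := A.indicator fun _ => x with hg
  set gj : ℕ → X → ℝ := fun j => A.indicator fun _ => u j with hgj
  have hmem : ∀ c : ℝ, MemLp (A.indicator fun _ => c) p μ :=
    fun c => memLp_indicator_const p hA c (Or.inr hAfin.ne)
  have hsub : ∀ j, gj j - g = A.indicator fun _ => u j - x := by
    intro j; funext y
    by_cases hy : y ∈ A <;> simp [hgj, hg, Set.indicator_of_mem, Set.indicator_of_notMem, hy]
  have hfsub : ∀ j, f ∘ gj j - f ∘ g = A.indicator fun _ => f (u j) - f x := by
    intro j; funext y
    by_cases hy : y ∈ A <;> simp [hgj, hg, Set.indicator_of_mem, Set.indicator_of_notMem, hy]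
  have h1 : Tendsto (fun j => eLpNorm (gj j - g) p μ) atTop (nhds 0) := by
    simp only [hsub, hnorm]
    have : Tendsto (fun j => (‖u j - x‖₊ : ℝ≥0∞)) atTop (nhds 0) := by
      rw [← ENNReal.coe_zero, ENNReal.tendsto_coe, ← NNReal.tendsto_coe]
      simpa [coe_nnnorm] using (tendsto_iff_norm_sub_tendsto_zero.mp hu)
    simpa using ENNReal.Tendsto.mul_const this (Or.inr hCtop)
  have h2 := hcont g gj (hmem x) (fun j => hmem (u j)) h1
  simp only [hfsub, hnorm] at h2
  -- deduce nnnorm tendsto 0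
  have h3 : Tendsto (fun j => (‖f (u j) - f x‖₊ : ℝ≥0∞)) atTop (nhds 0) := by
    have : Tendsto (fun j => ↑‖f (u j) - f x‖₊ * C * C⁻¹) atTop (nhds (0 * C⁻¹)) :=
      ENNReal.Tendsto.mul_const h2 (Or.inr (ENNReal.inv_ne_top.mpr hC0))
    simp only [zero_mul] at this
    convert this using 2 with j
    rw [mul_assoc, ENNReal.mul_inv_cancel hC0 hCtop, mul_one]
  rw [tendsto_iff_norm_sub_tendsto_zero]
  rw [← ENNReal.coe_zero, ENNReal.tendsto_coe, ← NNReal.tendsto_coe] at h3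
  simpa [coe_nnnorm] using h3
end

section
/- Let f : ℝ → ℝ be continuous with |f(t)| ≤ c|t| for all t ∈ ℝ and some constant c > 0. Then for any measure space (X, μ) and 1 ≤ p < ∞, the composition operator T_f(g) = f ∘ g is continuous from L^p(X, μ) to itself. -/
open MeasureTheory Filter
open scoped ENNReal NNReal

private lemma comp_bound_aux {X : Type*} (f : ℝ → ℝ) (c : ℝ)
    (hbound : ∀ t : ℝ, |f t| ≤ c * |t|) (g : X → ℝ) (s : Set X) :
    ∀ x, ‖s.indicator (f ∘ g) x‖ ≤ c * ‖s.indicator g x‖ := by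
  intro x
  by_cases hx : x ∈ s
  · simp only [Set.indicator_of_mem hx, Real.norm_eq_abs, Function.comp_apply]
    exact hbound _
  · simp only [Set.indicator_of_notMem hx, norm_zero, mul_zero, le_refl]

/-- Let `f : ℝ → ℝ` be continuous with `|f t| ≤ c * |t|` for all `t` and some
`c > 0`. Then for any measure space `(X, μ)` and `1 ≤ p < ∞`, the composition operator
`T_f(g) = f ∘ g` is continuous from `L^p(X, μ)` to itself: if `gⱼ → g` in `L^p` then
`f ∘ gⱼ → f ∘ g` in `L^p`. -/
theorem composition_continuous_Lp_of_continuous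
    {X : Type*} [MeasurableSpace X] (μ : Measure X)
    (p : ℝ) (hp : 1 ≤ p) (f : ℝ → ℝ) (hf : Continuous f)
    (c : ℝ) (hc : 0 < c) (hbound : ∀ t : ℝ, |f t| ≤ c * |t|) :
    ∀ (g : X → ℝ) (gj : ℕ → X → ℝ),
      MemLp g (ENNReal.ofReal p) μ → (∀ j, MemLp (gj j) (ENNReal.ofReal p) μ) →
      Tendsto (fun j => eLpNorm (gj j - g) (ENNReal.ofReal p) μ) atTop (nhds 0) →
      Tendsto (fun j => eLpNorm (f ∘ gj j - f ∘ g) (ENNReal.ofReal p) μ) atTop (nhds 0) := by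
  intro g gj hg hgj hconv
  set q : ENNReal := ENNReal.ofReal p with hq_def
  have hq1 : 1 ≤ q := by
    rw [hq_def, ← ENNReal.ofReal_one]
    exact ENNReal.ofReal_le_ofReal hp
  have hq' : q ≠ ∞ := ENNReal.ofReal_ne_top
  have hq0 : q ≠ 0 := by
    intro h; rw [h] at hq1; exact (not_le.mpr zero_lt_one) hq1
  -- from Lp convergence, get convergence in measure, uniform integrability and tightness
  obtain ⟨hmeas_conv, hui, hut⟩ :=
    (tendstoInMeasure_iff_tendsto_Lp hq1 hq' hgj hg).mpr hconv
  -- the composed functions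
  have hFmeas : ∀ j, AEStronglyMeasurable (f ∘ gj j) μ := fun j =>
    hf.comp_aestronglyMeasurable (hgj j).aestronglyMeasurable
  have hGmeas : AEStronglyMeasurable (f ∘ g) μ :=
    hf.comp_aestronglyMeasurable hg.aestronglyMeasurable
  have hFmem : ∀ j, MemLp (f ∘ gj j) q μ := fun j =>
    (hgj j).of_le_mul (hFmeas j) (Eventually.of_forall fun x => by
      simpa using comp_bound_aux f c hbound (gj j) Set.univ x)
  have hGmem : MemLp (f ∘ g) q μ :=
    hg.of_le_mul hGmeas (Eventually.of_forall fun x => by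
      simpa using comp_bound_aux f c hbound g Set.univ x)
  -- uniform integrability of the composed family
  have hFui : UnifIntegrable (fun j => f ∘ gj j) q μ := by
    intro ε hε
    obtain ⟨δ, hδ, hδ'⟩ := hui (show (0:ℝ) < ε / c from div_pos hε hc)
    refine ⟨δ, hδ, fun i s hs hμs => ?_⟩
    calc eLpNorm (s.indicator (f ∘ gj i)) q μ
        ≤ ENNReal.ofReal c * eLpNorm (s.indicator (gj i)) q μ :=
          eLpNorm_le_mul_eLpNorm_of_ae_le_mul
            (Eventually.of_forall (comp_bound_aux f c hbound (gj i) s)) q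
      _ ≤ ENNReal.ofReal c * ENNReal.ofReal (ε / c) := by
          exact mul_le_mul_right (hδ' i s hs hμs) _
      _ = ENNReal.ofReal ε := by
          rw [← ENNReal.ofReal_mul hc.le, mul_div_cancel₀ ε hc.ne']
  -- uniform tightness of the composed family
  have hFut : UnifTight (fun j => f ∘ gj j) q μ := by
    intro ε hε
    have hcnn : (0:ℝ≥0) < c.toNNReal := Real.toNNReal_pos.mpr hc
    obtain ⟨s, hμs, hs'⟩ := hut (show (0:ℝ≥0) < ε / c.toNNReal from
      div_pos hε hcnn)
    refine ⟨s, hμs, fun i => ?_⟩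
    calc eLpNorm (sᶜ.indicator (f ∘ gj i)) q μ
        ≤ ENNReal.ofReal c * eLpNorm (sᶜ.indicator (gj i)) q μ :=
          eLpNorm_le_mul_eLpNorm_of_ae_le_mul
            (Eventually.of_forall (comp_bound_aux f c hbound (gj i) sᶜ)) q
      _ ≤ ENNReal.ofReal c * (ε / c.toNNReal : ℝ≥0) := mul_le_mul_right (hs' i) _
      _ = ((c.toNNReal * (ε / c.toNNReal) : ℝ≥0) : ENNReal) := by
          rw [ENNReal.ofReal, ENNReal.coe_mul]
      _ = (ε : ENNReal) := by
          rw [mul_div_cancel₀ _ hcnn.ne']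
  -- subsequence argument: every subsequence has a further subsequence converging a.e.
  apply tendsto_of_subseq_tendsto
  intro ns hns
  have hsub : TendstoInMeasure μ (fun j => gj (ns j)) atTop g := fun ε hε =>
    (hmeas_conv ε hε).comp hns
  obtain ⟨ms, _, hae⟩ := hsub.exists_seq_tendsto_ae
  refine ⟨ms, tendsto_Lp_of_tendsto_ae hq1 hq' (fun k => hFmeas _) hGmem
    (fun ε hε => ?_) (fun ε hε => ?_) ?_⟩
  · obtain ⟨δ, hδ, hδ'⟩ := hFui hε
    exact ⟨δ, hδ, fun i s hs hμs => hδ' _ s hs hμs⟩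
  · obtain ⟨s, hμs, hs'⟩ := hFut hε
    exact ⟨s, hμs, fun i => hs' _⟩
  · filter_upwards [hae] with x hx
    exact (hf.tendsto (g x)).comp hx
end

section
/- Let Ω ⊆ ℝⁿ be open with finite Lebesgue measure, 1 ≤ p < ∞, and f : ℝ → ℝ a Borel function. Then f ∘ g ∈ L^p(Ω) for every g ∈ L^p(Ω) if and only if there exist α, β > 0 such that |f(t)| ≤ α|t| + β for all t ∈ ℝ. -/
open MeasureTheory
open scoped ENNReal NNReal

set_option maxHeartbeats 2000000

/-- Let `Ω ⊆ ℝⁿ` be open, nonempty, with finite Lebesgue measure, `1 ≤ p < ∞`,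
and `f : ℝ → ℝ` a Borel function. Then `f ∘ g ∈ L^p(Ω)` for every `g ∈ L^p(Ω)` iff there exist
`α, β > 0` with `|f t| ≤ α * |t| + β` for all `t`. -/
theorem lp_composition_finite_measure_iff (n : ℕ) (hn : 0 < n)
    (Ω : Set (Fin n → ℝ)) (hΩ : IsOpen Ω) (hne : Ω.Nonempty) (hfin : volume Ω < ⊤)
    (p : ℝ) (hp : 1 ≤ p) (f : ℝ → ℝ) (hf : Measurable f) :
    (∀ g : (Fin n → ℝ) → ℝ, MemLp g (ENNReal.ofReal p) (volume.restrict Ω) →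
      MemLp (f ∘ g) (ENNReal.ofReal p) (volume.restrict Ω)) ↔
    ∃ α > (0:ℝ), ∃ β > (0:ℝ), ∀ t : ℝ, |f t| ≤ α * |t| + β := by
  constructor
  · -- hard direction
    intro H
    by_contra hcon
    push_neg at hcon
    have hC : ∀ α : ℝ, 0 < α → ∀ β : ℝ, 0 < β → ∃ t : ℝ, α * |t| + β < |f t| := by
      intro α hα β hβ
      exact hcon α hα β hβ
    classical
    have hp0 : (0:ℝ) < p := lt_of_lt_of_le one_pos hp
    -- the bad points
    have hT : ∀ k : ℕ, ∃ t : ℝ, ((k:ℝ)+1) * |t| + ((k:ℝ)+1)^2 < |f t| := by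
      intro k
      exact hC ((k:ℝ)+1) (by positivity) (((k:ℝ)+1)^2) (by positivity)
    choose t ht using hT
    -- a box inside Ω
    obtain ⟨x, hxΩ⟩ := hne
    obtain ⟨ε, hε, hball⟩ := Metric.isOpen_iff.mp hΩ x hxΩ
    set ε' : ℝ := ε/2 with hε'def
    have hε' : 0 < ε' := by positivity
    -- widths
    set d : ℕ → ℝ := fun k => ε' / (((k:ℝ)+1) * ((k:ℝ)+2) * (1 + |t k| ^ p)) with hddef
    have htp : ∀ k, (0:ℝ) < 1 + |t k| ^ p := by
      intro k
      have : (0:ℝ) ≤ |t k| ^ p := Real.rpow_nonneg (abs_nonneg _) _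
      linarith
    have hd : ∀ k, 0 < d k := by
      intro k
      have := htp k
      apply div_pos hε'
      positivity
    set a : ℕ → ℝ := fun k => ∑ j ∈ Finset.range k, d j with hadef
    have hsum : ∀ m : ℕ, ∑ j ∈ Finset.range m, (1:ℝ)/(((j:ℝ)+1) * ((j:ℝ)+2)) = 1 - 1/((m:ℝ)+1) := by
      intro m
      induction m with
      | zero => simp
      | succ m ih =>
        rw [Finset.sum_range_succ, ih]
        push_cast
        have h1 : ((m:ℝ)+1) ≠ 0 := by positivity
        have h2 : ((m:ℝ)+2) ≠ 0 := by positivity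
        field_simp
        ring
    have hdle : ∀ k, d k ≤ ε' * ((1:ℝ)/(((k:ℝ)+1) * ((k:ℝ)+2))) := by
      intro k
      rw [hddef]
      have h1 : (0:ℝ) < ((k:ℝ)+1) * ((k:ℝ)+2) := by positivity
      rw [div_le_iff₀ (by positivity)]
      have h2 : ε' * (1 / (((k:ℝ)+1) * ((k:ℝ)+2))) * (((k:ℝ)+1) * ((k:ℝ)+2) * (1 + |t k| ^ p))
          = ε' * (1 + |t k| ^ p) := by field_simp
      rw [h2]
      have h3 : (0:ℝ) ≤ |t k| ^ p := Real.rpow_nonneg (abs_nonneg _) _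
      nlinarith
    have ha_mono : ∀ j k, j ≤ k → a j ≤ a k := by
      intro j k hjk
      exact Finset.sum_le_sum_of_subset_of_nonneg (Finset.range_subset_range.2 hjk)
        (fun i _ _ => (hd i).le)
    have ha_nonneg : ∀ k, 0 ≤ a k :=
      fun k => Finset.sum_nonneg fun i _ => (hd i).le
    have ha_le : ∀ m, a m ≤ ε' := by
      intro m
      have : a m ≤ ∑ j ∈ Finset.range m, ε' * ((1:ℝ)/(((j:ℝ)+1) * ((j:ℝ)+2))) :=
        Finset.sum_le_sum fun j _ => hdle j
      rw [← Finset.mul_sum, hsum] at this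
      have h1 : (0:ℝ) < (m:ℝ)+1 := by positivity
      nlinarith [one_div_pos.mpr h1]
    -- the disjoint boxes
    set i0 : Fin n := ⟨0, hn⟩ with hi0def
    set A : ℕ → Set (Fin n → ℝ) := fun k => Set.pi Set.univ
        (fun i => if i = i0 then Set.Ioo (x i0 + a k) (x i0 + a (k+1))
          else Set.Ioo (x i) (x i + ε')) with hAdef
    have hAmeas : ∀ k, MeasurableSet (A k) := by
      intro k
      exact MeasurableSet.univ_pi fun i => by split <;> exact measurableSet_Ioo
    have haa : ∀ k, a k < a (k+1) := by
      intro k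
      have : a (k+1) = a k + d k := Finset.sum_range_succ d k
      linarith [hd k]
    have hAsub : ∀ k, A k ⊆ Ω := by
      intro k y hy
      apply hball
      rw [Metric.mem_ball, dist_pi_lt_iff hε]
      intro i
      have hyi := hy i (Set.mem_univ i)
      rw [Real.dist_eq]
      by_cases hii : i = i0
      · subst hii
        simp only [if_pos rfl, if_true, Set.mem_Ioo] at hyi
        obtain ⟨hy1, hy2⟩ := hyi
        have h1 := ha_nonneg k
        have h2 := ha_le (k+1)
        rw [abs_lt]
        constructor <;> [linarith ; linarith]
      · simp only [if_neg hii, Set.mem_Ioo] at hyi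
        obtain ⟨hy1, hy2⟩ := hyi
        rw [abs_lt]
        constructor <;> [linarith ; linarith]
    have hdisj : Pairwise (Function.onFun Disjoint A) := by
      have key : ∀ j k, j < k → ∀ y, y ∈ A j → y ∈ A k → False := by
        intro j k hjk y hyj hyk
        have h1 := hyj i0 (Set.mem_univ i0)
        have h2 := hyk i0 (Set.mem_univ i0)
        simp only [if_pos rfl, if_true, Set.mem_Ioo] at h1 h2
        have h3 : a (j+1) ≤ a k := ha_mono _ _ hjk
        linarith [h1.2, h2.1]
      intro j k hjk
      rcases lt_or_gt_of_ne hjk with h | h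
      · exact Set.disjoint_left.mpr fun y hyj hyk => key j k h y hyj hyk
      · exact Set.disjoint_left.mpr fun y hyj hyk => key k j h y hyk hyj
    -- measure of the boxes
    set K : ℝ := ε' ^ (n-1) with hKdef
    have hK : 0 < K := by positivity
    have hvol : ∀ k, volume.restrict Ω (A k) = ENNReal.ofReal (d k * K) := by
      intro k
      rw [Measure.restrict_apply (hAmeas k),
        Set.inter_eq_self_of_subset_left (hAsub k), hAdef]
      rw [volume_pi_pi]
      have hstep : ∀ i : Fin n,
          volume (if i = i0 then Set.Ioo (x i0 + a k) (x i0 + a (k+1))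
            else Set.Ioo (x i) (x i + ε'))
          = if i = i0 then ENNReal.ofReal (d k) else ENNReal.ofReal ε' := by
        intro i
        by_cases hii : i = i0
        · simp only [if_pos hii, Real.volume_Ioo]
          congr 1
          have : a (k+1) = a k + d k := Finset.sum_range_succ d k
          rw [this]; ring
        · simp only [if_neg hii, Real.volume_Ioo]
          congr 1; ring
      simp_rw [hstep]
      rw [← Finset.mul_prod_erase Finset.univ _ (Finset.mem_univ i0), if_pos rfl]
      have hrest : ∏ i ∈ Finset.univ.erase i0,
          (if i = i0 then ENNReal.ofReal (d k) else ENNReal.ofReal ε') = ENNReal.ofReal ε' ^ (n-1) := by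
        rw [Finset.prod_congr rfl (fun i hi => if_neg (Finset.ne_of_mem_erase hi)),
          Finset.prod_const, Finset.card_erase_of_mem (Finset.mem_univ i0), Finset.card_univ,
          Fintype.card_fin]
      rw [hrest, ← ENNReal.ofReal_pow hε'.le, ← ENNReal.ofReal_mul (hd k).le]
    -- the function g
    set g : (Fin n → ℝ) → ℝ := fun y => ∑' k, (A k).indicator (fun _ => t k) y with hgdef
    have hnotmem : ∀ {j k : ℕ} {y}, j ≠ k → y ∈ A k → y ∉ A j := by
      intro j k y hjk hy hyj
      exact Set.disjoint_left.mp (hdisj hjk) hyj hy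
    have hgval1 : ∀ k y, y ∈ A k → g y = t k := by
      intro k y hy
      simp only [hgdef]
      have : ∑' j, (A j).indicator (fun _ => t j) y = (A k).indicator (fun _ => t k) y := by
        apply tsum_eq_single
        intro j hjk
        exact Set.indicator_of_notMem (hnotmem hjk hy) _
      rw [this, Set.indicator_of_mem hy]
    have hgval0 : ∀ y, (∀ k, y ∉ A k) → g y = 0 := by
      intro y hy
      simp only [hgdef]
      have : ∀ j : ℕ, (A j).indicator (fun _ => t j) y = 0 :=
        fun j => Set.indicator_of_notMem (hy j) _
      rw [tsum_congr this, tsum_zero]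
    have hgmeas : Measurable g := by
      apply measurable_of_tendsto_metrizable
        (f := fun N y => ∑ j ∈ Finset.range N, (A j).indicator (fun _ => t j) y)
      · intro N
        exact Finset.measurable_sum _ fun j _ => measurable_const.indicator (hAmeas j)
      · rw [tendsto_pi_nhds]
        intro y
        have hEq : (fun _ : ℕ => g y) =ᶠ[Filter.atTop]
            (fun N => ∑ j ∈ Finset.range N, (A j).indicator (fun _ => t j) y) := by
          by_cases hex : ∃ k, y ∈ A k
          · obtain ⟨k, hk⟩ := hex
            filter_upwards [Filter.eventually_ge_atTop (k+1)] with N hN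
            rw [hgval1 k y hk]
            rw [Finset.sum_eq_single_of_mem k (Finset.mem_range.2 hN)]
            · exact (Set.indicator_of_mem hk (fun _ => t k)).symm
            · intro j _ hjk
              exact Set.indicator_of_notMem (hnotmem hjk hk) (fun _ => t j)
          · push_neg at hex
            filter_upwards with N
            rw [hgval0 y hex]
            exact (Finset.sum_eq_zero fun j _ => Set.indicator_of_notMem (hex j) (fun _ => t j)).symm
        exact Filter.Tendsto.congr' hEq tendsto_const_nhds
    -- membership of g in L^p
    set q : ℝ≥0∞ := ENNReal.ofReal p with hqdef
    have hq0 : q ≠ 0 := by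
      simp only [hqdef, ne_eq, ENNReal.ofReal_eq_zero, not_le]
      exact hp0
    have hqtop : q ≠ ⊤ := ENNReal.ofReal_ne_top
    have hqtoReal : q.toReal = p := ENNReal.toReal_ofReal hp0.le
    have hnn : ∀ (c : ℝ), ((‖c‖₊ : ℝ≥0∞)) ^ p = ENNReal.ofReal (|c| ^ p) := by
      intro c
      rw [← enorm_eq_nnnorm, ← ofReal_norm, Real.norm_eq_abs,
        ENNReal.ofReal_rpow_of_nonneg (abs_nonneg _) hp0.le]
    have hpt1 : ∀ y, ((‖g y‖₊ : ℝ≥0∞)) ^ p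
        = ∑' k, (A k).indicator (fun _ => ENNReal.ofReal (|t k| ^ p)) y := by
      intro y
      by_cases hex : ∃ k, y ∈ A k
      · obtain ⟨k, hk⟩ := hex
        rw [hgval1 k y hk, hnn,
          tsum_eq_single k (fun j hjk =>
            Set.indicator_of_notMem (hnotmem hjk hk) (fun _ => ENNReal.ofReal (|t j| ^ p))),
          Set.indicator_of_mem hk]
      · push_neg at hex
        rw [hgval0 y hex,
          tsum_congr (fun j =>
            Set.indicator_of_notMem (hex j) (fun _ => ENNReal.ofReal (|t j| ^ p))), tsum_zero]
        simp [ENNReal.zero_rpow_of_pos hp0]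
    have hint : ∫⁻ y, ((‖g y‖₊ : ℝ≥0∞)) ^ p ∂(volume.restrict Ω)
        = ∑' k, ENNReal.ofReal (|t k| ^ p) * ENNReal.ofReal (d k * K) := by
      simp_rw [hpt1]
      rw [lintegral_tsum (fun k => (measurable_const.indicator (hAmeas k)).aemeasurable)]
      congr 1
      funext k
      rw [lintegral_indicator_const (hAmeas k), hvol k]
    have hterm : ∀ k : ℕ, ENNReal.ofReal (|t k| ^ p) * ENNReal.ofReal (d k * K)
        ≤ ENNReal.ofReal (ε' * K * (1/(((k:ℝ)+1) * ((k:ℝ)+2)))) := by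
      intro k
      rw [← ENNReal.ofReal_mul (by positivity)]
      apply ENNReal.ofReal_le_ofReal
      have hu : (0:ℝ) ≤ |t k| ^ p := Real.rpow_nonneg (abs_nonneg _) _
      have key : |t k| ^ p * (d k * K)
          = ε' * K * (|t k|^p / (((k:ℝ)+1) * ((k:ℝ)+2) * (1 + |t k|^p))) := by
        simp only [hddef]
        ring
      rw [key]
      have h2 : |t k|^p / (((k:ℝ)+1) * ((k:ℝ)+2) * (1 + |t k|^p))
          ≤ 1/(((k:ℝ)+1) * ((k:ℝ)+2)) := by
        rw [div_le_div_iff₀ (by positivity) (by positivity)]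
        nlinarith [htp k]
      have := mul_le_mul_of_nonneg_left h2 (by positivity : (0:ℝ) ≤ ε' * K)
      linarith
    have hfinsum : ∀ s : Finset ℕ,
        ∑ k ∈ s, ENNReal.ofReal (ε' * K * (1/(((k:ℝ)+1) * ((k:ℝ)+2)))) ≤ ENNReal.ofReal (ε' * K) := by
      intro s
      obtain ⟨m, hm⟩ := s.exists_nat_subset_range
      calc ∑ k ∈ s, ENNReal.ofReal (ε' * K * (1/(((k:ℝ)+1) * ((k:ℝ)+2))))
          ≤ ∑ k ∈ Finset.range m, ENNReal.ofReal (ε' * K * (1/(((k:ℝ)+1) * ((k:ℝ)+2)))) :=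
            Finset.sum_le_sum_of_subset hm
        _ = ENNReal.ofReal (∑ k ∈ Finset.range m, ε' * K * (1/(((k:ℝ)+1) * ((k:ℝ)+2)))) :=
            (ENNReal.ofReal_sum_of_nonneg (fun i _ => by positivity)).symm
        _ ≤ ENNReal.ofReal (ε' * K) := by
            apply ENNReal.ofReal_le_ofReal
            rw [← Finset.mul_sum, hsum]
            have h1 : (0:ℝ) < (m:ℝ)+1 := by positivity
            have h2 : (0:ℝ) ≤ 1/((m:ℝ)+1) := by positivity
            have h3 : (0:ℝ) < ε' * K := by positivity
            nlinarith
    have hgmem : MemLp g q (volume.restrict Ω) := by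
      refine ⟨hgmeas.aestronglyMeasurable, ?_⟩
      rw [eLpNorm_eq_lintegral_rpow_enorm_toReal hq0 hqtop, hqtoReal]
      refine ENNReal.rpow_lt_top_of_nonneg (by positivity) ?_
      simp only [enorm_eq_nnnorm]
      rw [hint]
      exact ((le_trans (ENNReal.tsum_le_tsum hterm)
        (Summable.tsum_le_of_sum_le ENNReal.summable hfinsum)).trans_lt ENNReal.ofReal_lt_top).ne
    -- divergence of f ∘ g
    have hpt2 : ∀ y, (∑' k, (A k).indicator (fun _ => ENNReal.ofReal (|f (t k)| ^ p)) y)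
        ≤ ((‖(f ∘ g) y‖₊ : ℝ≥0∞)) ^ p := by
      intro y
      by_cases hex : ∃ k, y ∈ A k
      · obtain ⟨k, hk⟩ := hex
        rw [tsum_eq_single k (fun j hjk =>
            Set.indicator_of_notMem (hnotmem hjk hk) (fun _ => ENNReal.ofReal (|f (t j)| ^ p))),
          Set.indicator_of_mem hk, Function.comp_apply, hgval1 k y hk, hnn]
      · push_neg at hex
        rw [tsum_congr (fun j =>
            Set.indicator_of_notMem (hex j) (fun _ => ENNReal.ofReal (|f (t j)| ^ p))), tsum_zero]
        exact zero_le
    set δ : ℝ := ε' * K / 2 with hδdef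
    have hδ : 0 < δ := by positivity
    have hlow : ∀ k : ℕ, ENNReal.ofReal (δ / ((k:ℝ)+2))
        ≤ ENNReal.ofReal (|f (t k)| ^ p) * ENNReal.ofReal (d k * K) := by
      intro k
      rw [← ENNReal.ofReal_mul (by positivity)]
      apply ENNReal.ofReal_le_ofReal
      have hu : (0:ℝ) ≤ |t k| ^ p := Real.rpow_nonneg (abs_nonneg _) _
      have hk0 : (0:ℝ) ≤ (k:ℝ) := Nat.cast_nonneg k
      have habs : (0:ℝ) ≤ |t k| := abs_nonneg (t k)
      have hB : (1:ℝ) ≤ |t k| + ((k:ℝ)+1) := by linarith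
      have hBp1 : |t k| ^ p ≤ (|t k| + ((k:ℝ)+1)) ^ p :=
        Real.rpow_le_rpow (abs_nonneg _) (by linarith) hp0.le
      have hBp2 : (1:ℝ) ≤ (|t k| + ((k:ℝ)+1)) ^ p := by
        calc (1:ℝ) = 1 ^ p := (Real.one_rpow p).symm
          _ ≤ _ := Real.rpow_le_rpow (by norm_num) hB hp0.le
      have hfp : (((k:ℝ)+1) * (|t k| + ((k:ℝ)+1))) ^ p ≤ |f (t k)| ^ p := by
        apply Real.rpow_le_rpow (by positivity) ?_ hp0.le
        nlinarith [(ht k).le]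
      have hmul : (((k:ℝ)+1) * (|t k| + ((k:ℝ)+1))) ^ p
          = ((k:ℝ)+1) ^ p * (|t k| + ((k:ℝ)+1)) ^ p :=
        Real.mul_rpow (by positivity) (by positivity)
      have hc1p : ((k:ℝ)+1) ≤ ((k:ℝ)+1) ^ p := by
        calc ((k:ℝ)+1) = ((k:ℝ)+1) ^ (1:ℝ) := (Real.rpow_one _).symm
          _ ≤ _ := Real.rpow_le_rpow_of_exponent_le (by linarith) hp
      have hcomb : ((k:ℝ)+1) * ((1 + |t k| ^ p)/2) ≤ |f (t k)| ^ p := by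
        have hBp : (1 + |t k| ^ p)/2 ≤ (|t k| + ((k:ℝ)+1)) ^ p := by linarith
        calc ((k:ℝ)+1) * ((1 + |t k| ^ p)/2)
            ≤ ((k:ℝ)+1)^p * (|t k| + ((k:ℝ)+1)) ^ p := by
              apply mul_le_mul hc1p hBp (by linarith [htp k]) (by positivity)
          _ = (((k:ℝ)+1) * (|t k| + ((k:ℝ)+1))) ^ p := hmul.symm
          _ ≤ |f (t k)| ^ p := hfp
      have hdkK : (0:ℝ) ≤ d k * K := mul_nonneg (hd k).le hK.le
      calc δ / ((k:ℝ)+2)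
          = ((k:ℝ)+1) * ((1 + |t k| ^ p)/2) * (d k * K) := by
            have hdk_eq : d k = ε' / (((k:ℝ)+1) * ((k:ℝ)+2) * (1 + |t k| ^ p)) := rfl
            have h1 : ((k:ℝ)+1) ≠ 0 := by positivity
            have h2 : ((k:ℝ)+2) ≠ 0 := by positivity
            have h3 : (1 + |t k| ^ p) ≠ 0 := (htp k).ne'
            have hgen : ∀ (e kk c1 c2 u : ℝ), c1 ≠ 0 → c2 ≠ 0 → u ≠ 0 →
                e * kk / 2 / c2 = c1 * (u/2) * (e/(c1*c2*u) * kk) := by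
              intro e kk c1 c2 u hc1 hc2 hu
              field_simp
            rw [hdk_eq, hδdef]
            exact hgen ε' K _ _ _ h1 h2 h3
        _ ≤ |f (t k)| ^ p * (d k * K) := mul_le_mul_of_nonneg_right hcomb hdkK
    have hdiv : (∑' k : ℕ, ENNReal.ofReal (δ / ((k:ℝ)+2))) = ⊤ := by
      by_contra htop
      have hcoe : ∀ r : ℝ, ENNReal.ofReal r = ((Real.toNNReal r : ℝ≥0) : ℝ≥0∞) := fun r => rfl
      have hsummable : Summable (fun k : ℕ => Real.toNNReal (δ / ((k:ℝ)+2))) := by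
        rw [← ENNReal.tsum_coe_ne_top_iff_summable]
        simpa only [hcoe] using htop
      have hsummable2 : Summable (fun k : ℕ => δ / ((k:ℝ)+2)) := by
        have h := NNReal.summable_coe.2 hsummable
        refine h.congr fun k => ?_
        rw [Real.coe_toNNReal _ (by positivity)]
      have hsum3 : Summable (fun k : ℕ => 1 / (((k+2:ℕ)):ℝ)) := by
        have h := hsummable2.div_const δ
        refine h.congr fun k => ?_
        push_cast
        rw [div_right_comm, div_self hδ.ne']
      exact Real.not_summable_one_div_natCast ((summable_nat_add_iff 2).1 hsum3)
    have hfg_int : ∫⁻ y, ((‖(f ∘ g) y‖₊ : ℝ≥0∞)) ^ p ∂(volume.restrict Ω) = ⊤ := by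
      have h1 : (∑' k : ℕ, ENNReal.ofReal (|f (t k)| ^ p) * ENNReal.ofReal (d k * K))
          ≤ ∫⁻ y, ((‖(f ∘ g) y‖₊ : ℝ≥0∞)) ^ p ∂(volume.restrict Ω) := by
        have h2 : ∫⁻ y, (∑' k, (A k).indicator (fun _ => ENNReal.ofReal (|f (t k)| ^ p)) y)
              ∂(volume.restrict Ω)
            = ∑' k : ℕ, ENNReal.ofReal (|f (t k)| ^ p) * ENNReal.ofReal (d k * K) := by
          rw [lintegral_tsum (fun k => (measurable_const.indicator (hAmeas k)).aemeasurable)]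
          congr 1
          funext k
          rw [lintegral_indicator_const (hAmeas k), hvol k]
        rw [← h2]
        exact lintegral_mono hpt2
      have h3 : (⊤ : ℝ≥0∞) ≤ ∑' k : ℕ, ENNReal.ofReal (|f (t k)| ^ p) * ENNReal.ofReal (d k * K) := by
        rw [← hdiv]
        exact ENNReal.tsum_le_tsum hlow
      exact top_le_iff.1 (le_trans h3 h1)
    have hfgnot : ¬ MemLp (f ∘ g) q (volume.restrict Ω) := by
      intro hmem
      have hlt := lintegral_rpow_enorm_lt_top_of_eLpNorm_lt_top hq0 hqtop hmem.2
      simp only [enorm_eq_nnnorm] at hlt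
      rw [hqtoReal, hfg_int] at hlt
      exact (lt_irrefl _ hlt)
    exact hfgnot (H g hgmem)
  · -- easy direction
    rintro ⟨α, hα, β, hβ, hb⟩ g hg
    haveI : IsFiniteMeasure (volume.restrict Ω) :=
      ⟨by simpa [Measure.restrict_apply_univ] using hfin⟩
    have hmaj : MemLp (fun x => α * |g x| + β) (ENNReal.ofReal p) (volume.restrict Ω) :=
      (hg.abs.const_mul α).add (memLp_const β)
    refine hmaj.of_le ((hf.comp_aemeasurable hg.1.aemeasurable).aestronglyMeasurable) ?_
    filter_upwards with x
    have h1 := hb (g x)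
    have h2 : 0 ≤ α * |g x| + β := by positivity
    simp only [Function.comp_apply, Real.norm_eq_abs, abs_of_nonneg h2]
    exact h1
end

section
/- If f : ℝ → ℝ is continuous and bounded, then the composition operator T_f(g) = f ∘ g is continuous from L^∞(X, μ) to itself. -/
open MeasureTheory Filter
open scoped ENNReal NNReal

/-- If `f : ℝ → ℝ` is continuous and bounded, then the composition operator
`T_f(g) = f ∘ g` is continuous from `L^∞(X, μ)` to itself: if `gⱼ → g` in `L^∞` then
`f ∘ gⱼ → f ∘ g` in `L^∞`. -/
theorem composition_continuous_Linfty_of_continuous_bounded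
    {X : Type*} [MeasurableSpace X] (μ : Measure X)
    (f : ℝ → ℝ) (hf : Continuous f) (C : ℝ) (hC : ∀ t : ℝ, |f t| ≤ C) :
    ∀ (g : X → ℝ) (gj : ℕ → X → ℝ),
      MemLp g ⊤ μ → (∀ j, MemLp (gj j) ⊤ μ) →
      Tendsto (fun j => eLpNorm (gj j - g) ⊤ μ) atTop (nhds 0) →
      Tendsto (fun j => eLpNorm (f ∘ gj j - f ∘ g) ⊤ μ) atTop (nhds 0) := by
  intro g gj hg hgj htend
  rw [ENNReal.tendsto_atTop_zero] at htend ⊢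
  intro ε hε
  -- essential bound for g
  set M : ℝ := (eLpNormEssSup g μ).toReal with hM
  have hMfin : eLpNormEssSup g μ < ⊤ := by
    have := hg.2; rwa [eLpNorm_exponent_top] at this
  have hgM : ∀ᵐ x ∂μ, ‖g x‖ ≤ M := by
    filter_upwards [ae_le_eLpNormEssSup (f := g) (μ := μ)] with x hx
    have : (‖g x‖₊ : ℝ≥0∞) ≤ eLpNormEssSup g μ := hx
    calc ‖g x‖ = (‖g x‖₊ : ℝ≥0∞).toReal := by simp
      _ ≤ M := ENNReal.toReal_mono hMfin.ne this
  -- a positive finite ε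
  set ε₀ : ℝ≥0∞ := min ε 1 with hε₀
  have hε₀pos : 0 < ε₀ := lt_min hε one_pos
  have hε₀fin : ε₀ ≠ ⊤ := by
    simp [hε₀]
  have hε₀r : 0 < ε₀.toReal := ENNReal.toReal_pos hε₀pos.ne' hε₀fin
  -- uniform continuity on the compact interval
  have hK : IsCompact (Set.Icc (-(M + 1)) (M + 1)) := isCompact_Icc
  have huc : UniformContinuousOn f (Set.Icc (-(M + 1)) (M + 1)) :=
    hK.uniformContinuousOn_of_continuous hf.continuousOn
  rw [Metric.uniformContinuousOn_iff] at huc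
  obtain ⟨δ, hδpos, hδ⟩ := huc ε₀.toReal hε₀r
  set δ' : ℝ := min δ 1 with hδ'
  have hδ'pos : 0 < δ' := lt_min hδpos one_pos
  obtain ⟨N, hN⟩ := htend (ENNReal.ofReal (δ' / 2)) (by positivity)
  refine ⟨N, fun n hn => ?_⟩
  have hdiff : ∀ᵐ x ∂μ, ‖gj n x - g x‖ ≤ δ' / 2 := by
    filter_upwards [ae_le_eLpNormEssSup (f := gj n - g) (μ := μ)] with x hx
    have h1 : (‖gj n x - g x‖₊ : ℝ≥0∞) ≤ ENNReal.ofReal (δ' / 2) := by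
      refine le_trans hx ?_
      have := hN n hn
      rwa [eLpNorm_exponent_top] at this
    have h2 := ENNReal.toReal_mono ENNReal.ofReal_ne_top h1
    rwa [ENNReal.toReal_ofReal (by positivity), ENNReal.coe_toReal, coe_nnnorm] at h2
  have hbound : ∀ᵐ x ∂μ, ‖(f ∘ gj n - f ∘ g) x‖ ≤ ε₀.toReal := by
    filter_upwards [hgM, hdiff] with x hx1 hx2
    have hgK : g x ∈ Set.Icc (-(M + 1)) (M + 1) := by
      rw [Real.norm_eq_abs, abs_le] at hx1
      constructor <;> [linarith [hx1.1]; linarith [hx1.2]]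
    have hgjK : gj n x ∈ Set.Icc (-(M + 1)) (M + 1) := by
      rw [Real.norm_eq_abs, abs_le] at hx1
      rw [Real.norm_eq_abs, abs_le] at hx2
      have : δ' ≤ 1 := min_le_right _ _
      constructor <;> [nlinarith [hx2.1]; nlinarith [hx2.2]]
    have hlt : dist (gj n x) (g x) < δ := by
      rw [Real.dist_eq]
      have : δ' ≤ δ := min_le_left _ _
      calc |gj n x - g x| ≤ δ' / 2 := by rwa [Real.norm_eq_abs] at hx2
        _ < δ' := by linarith
        _ ≤ δ := this
    have := hδ (gj n x) hgjK (g x) hgK hlt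
    simp only [Pi.sub_apply, Function.comp_apply, Real.norm_eq_abs]
    rw [Real.dist_eq] at this
    exact this.le
  calc eLpNorm (f ∘ gj n - f ∘ g) ⊤ μ = eLpNormEssSup (f ∘ gj n - f ∘ g) μ :=
        eLpNorm_exponent_top
    _ ≤ ENNReal.ofReal ε₀.toReal := eLpNormEssSup_le_of_ae_bound hbound
    _ = ε₀ := ENNReal.ofReal_toReal hε₀fin
    _ ≤ ε := min_le_left _ _
end

section
/- Define B_1 := 1_{[0,1]} and B_{m+1} := B_m * B_1 (convolution) for m ≥ 1. Then for every m-times continuously differentiable function f : ℝ → ℝ with bounded derivatives, all x, h ∈ ℝ, and all m ≥ 1, one has Δ_h^m f(x) = ∫_ℝ B_m(t) f^{(m)}(x + th) h^m dt. -/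
open MeasureTheory

/-- The B-spline functions: `Bspline 1 = 1_{[0,1]}` and `Bspline (m+1) = Bspline m * Bspline 1`
(convolution). (`Bspline 0` is a junk value.) -/
noncomputable def Bspline : ℕ → ℝ → ℝ
  | 0 => fun _ => 0
  | 1 => Set.indicator (Set.Icc (0 : ℝ) 1) fun _ => 1
  | (m + 2) => fun x =>
      ∫ t, Bspline (m + 1) (x - t) * Set.indicator (Set.Icc (0 : ℝ) 1) (fun _ => (1 : ℝ)) t

local notation "I1" => Set.indicator (Set.Icc (0 : ℝ) 1) (fun _ => (1 : ℝ))

lemma I1_meas : Measurable I1 :=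
  (measurable_const.indicator measurableSet_Icc)

lemma I1_nonneg (t : ℝ) : 0 ≤ I1 t := Set.indicator_nonneg (fun _ _ => zero_le_one) t

lemma I1_le_one (t : ℝ) : I1 t ≤ 1 := Set.indicator_le_self' (fun _ _ => zero_le_one) t |>.trans (by
  by_cases ht : t ∈ Set.Icc (0:ℝ) 1 <;> simp [ht])

lemma I1_integrable : Integrable I1 := by
  rw [integrable_indicator_iff measurableSet_Icc]
  exact integrableOn_const (by simp [Real.volume_Icc])

lemma Bspline_measurable (m : ℕ) : Measurable (Bspline m) := by
  induction m using Nat.strong_induction_on with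
  | _ m ih =>
    match m with
    | 0 => exact measurable_const
    | 1 => exact I1_meas
    | (n+2) =>
      have hB : Measurable (Bspline (n+1)) := ih (n+1) (by omega)
      have hu : StronglyMeasurable fun p : ℝ × ℝ => Bspline (n+1) (p.1 - p.2) * I1 p.2 :=
        ((hB.comp (measurable_fst.sub measurable_snd)).mul (I1_meas.comp measurable_snd)).stronglyMeasurable
      exact hu.integral_prod_right'.measurable

lemma Bspline_nonneg (m : ℕ) (x : ℝ) : 0 ≤ Bspline m x := by
  induction m using Nat.strong_induction_on generalizing x with
  | _ m ih =>
    match m with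
    | 0 => simp [Bspline]
    | 1 => exact I1_nonneg x
    | (n+2) =>
      exact integral_nonneg fun t => mul_nonneg (ih (n+1) (by omega) _) (I1_nonneg t)

lemma Bspline_le_one (m : ℕ) (x : ℝ) : Bspline m x ≤ 1 := by
  induction m using Nat.strong_induction_on generalizing x with
  | _ m ih =>
    match m with
    | 0 => simp [Bspline]
    | 1 => exact I1_le_one x
    | (n+2) =>
      have hB : Measurable (Bspline (n+1)) := Bspline_measurable (n+1)
      have hint : Integrable (fun t => Bspline (n+1) (x - t) * I1 t) := by
        refine I1_integrable.mono' ?_ (Filter.Eventually.of_forall fun t => ?_)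
        · exact ((hB.comp (measurable_const.sub measurable_id)).mul I1_meas).aestronglyMeasurable
        · rw [Real.norm_eq_abs, abs_mul, abs_of_nonneg (Bspline_nonneg _ _),
            abs_of_nonneg (I1_nonneg t)]
          calc Bspline (n+1) (x - t) * I1 t ≤ 1 * I1 t :=
                mul_le_mul_of_nonneg_right (ih (n+1) (by omega) _) (I1_nonneg t)
            _ = I1 t := one_mul _
      calc Bspline (n+2) x = ∫ t, Bspline (n+1) (x - t) * I1 t := rfl
        _ ≤ ∫ t, I1 t := by
            refine integral_mono hint I1_integrable fun t => ?_
            calc Bspline (n+1) (x - t) * I1 t ≤ 1 * I1 t :=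
                  mul_le_mul_of_nonneg_right (ih (n+1) (by omega) _) (I1_nonneg t)
              _ = I1 t := one_mul _
        _ = 1 := by
            rw [integral_indicator measurableSet_Icc]
            simp [Real.volume_Icc]

lemma Bspline_eq_zero (m : ℕ) (x : ℝ) (hx : x ∉ Set.Icc (0:ℝ) m) : Bspline m x = 0 := by
  induction m using Nat.strong_induction_on generalizing x with
  | _ m ih =>
    match m with
    | 0 => simp [Bspline]
    | 1 => exact Set.indicator_of_notMem (by exact_mod_cast hx) _
    | (n+2) =>
      have hx' : x < 0 ∨ ((n:ℝ)+2) < x := by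
        simp only [Set.mem_Icc, not_and_or, not_le] at hx
        push_cast at hx ⊢
        tauto
      have : ∀ t : ℝ, Bspline (n+1) (x - t) * I1 t = 0 := by
        intro t
        by_cases ht : t ∈ Set.Icc (0:ℝ) 1
        · have h0 : Bspline (n+1) (x - t) = 0 := by
            apply ih (n+1) (by omega)
            simp only [Set.mem_Icc, not_and_or, not_le]
            obtain ⟨ht0, ht1⟩ := ht
            rcases hx' with h | h
            · left; linarith
            · right; push_cast; linarith
          rw [h0, zero_mul]
        · rw [Set.indicator_of_notMem ht, mul_zero]
      calc Bspline (n+2) x = ∫ t, Bspline (n+1) (x - t) * I1 t := rfl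
        _ = 0 := by simp only [this, integral_zero]

/-- indicator-of-box dominated integrability on the product space -/
lemma integrable_of_box {F : ℝ × ℝ → ℝ} (hF : AEStronglyMeasurable F (volume.prod volume))
    (a b c d C : ℝ) (hbd : ∀ p : ℝ × ℝ, ‖F p‖ ≤ (Set.Icc a b ×ˢ Set.Icc c d).indicator (fun _ => C) p) :
    Integrable F (volume.prod volume) := by
  refine Integrable.mono' ?_ hF (Filter.Eventually.of_forall hbd)
  rw [integrable_indicator_iff (measurableSet_Icc.prod measurableSet_Icc)]
  refine integrableOn_const ?_
  rw [Measure.prod_prod]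
  exact ENNReal.mul_ne_top (by simp [Real.volume_Icc]) (by simp [Real.volume_Icc])

lemma key_swap (n : ℕ) (K : ℝ → ℝ) (hK : Measurable K) (C : ℝ) (hC : ∀ u, |K u| ≤ C) :
    ∫ u, Bspline (n+2) u * K u = ∫ t, Bspline (n+1) t * ∫ s, I1 s * K (t + s) := by
  have hC0 : 0 ≤ C := le_trans (abs_nonneg _) (hC 0)
  have habs : ∀ (m : ℕ) (y : ℝ), |Bspline m y| ≤ 1 :=
    fun m y => abs_le.2 ⟨by linarith [Bspline_nonneg m y], Bspline_le_one m y⟩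
  have hI1abs : ∀ t : ℝ, |I1 t| ≤ 1 := fun t => abs_le.2 ⟨by linarith [I1_nonneg t], I1_le_one t⟩
  -- first double integrand
  have hmeas1 : AEStronglyMeasurable (Function.uncurry fun u t => (Bspline (n+1) (u - t) * I1 t) * K u) (volume.prod volume) := by
    exact ((((Bspline_measurable (n+1)).comp (measurable_fst.sub measurable_snd)).mul
      (I1_meas.comp measurable_snd)).mul (hK.comp measurable_fst)).aestronglyMeasurable
  have hint1 : Integrable (Function.uncurry fun u t => (Bspline (n+1) (u - t) * I1 t) * K u) (volume.prod volume) := by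
    refine integrable_of_box hmeas1 0 (n+2) 0 1 C fun p => ?_
    obtain ⟨u, t⟩ := p
    by_cases hp : (u, t) ∈ Set.Icc (0:ℝ) (n+2) ×ˢ Set.Icc (0:ℝ) 1
    · rw [Set.indicator_of_mem hp]
      simp only [Function.uncurry, Real.norm_eq_abs, abs_mul]
      calc |Bspline (n+1) (u-t)| * |I1 t| * |K u| ≤ 1 * 1 * C := by
            gcongr <;> [exact habs _ _; exact hI1abs t; exact hC u]
        _ = C := by ring
    · rw [Set.indicator_of_notMem hp]
      have hz : Bspline (n+1) (u - t) * I1 t = 0 := by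
        by_cases ht : t ∈ Set.Icc (0:ℝ) 1
        · have hu : u ∉ Set.Icc (0:ℝ) ((n:ℝ)+2) := fun hu => hp (Set.mem_prod.2 ⟨by exact_mod_cast hu, ht⟩)
          have h0 : Bspline (n+1) (u - t) = 0 := by
            apply Bspline_eq_zero
            simp only [Set.mem_Icc, not_and_or, not_le] at hu ⊢
            obtain ⟨ht0, ht1⟩ := ht
            push_cast
            rcases hu with h | h
            · left; linarith
            · right; linarith
          rw [h0, zero_mul]
        · rw [Set.indicator_of_notMem ht, mul_zero]
      simp [Function.uncurry, hz]
  -- second double integrand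
  have hmeas2 : AEStronglyMeasurable (Function.uncurry fun t v => (Bspline (n+1) v * I1 t) * K (v + t)) (volume.prod volume) := by
    exact ((((Bspline_measurable (n+1)).comp measurable_snd).mul
      (I1_meas.comp measurable_fst)).mul (hK.comp (measurable_snd.add measurable_fst))).aestronglyMeasurable
  have hint2 : Integrable (Function.uncurry fun t v => (Bspline (n+1) v * I1 t) * K (v + t)) (volume.prod volume) := by
    refine integrable_of_box hmeas2 0 1 0 (n+1) C fun p => ?_
    obtain ⟨t, v⟩ := p
    by_cases hp : (t, v) ∈ Set.Icc (0:ℝ) 1 ×ˢ Set.Icc (0:ℝ) (n+1)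
    · rw [Set.indicator_of_mem hp]
      simp only [Function.uncurry, Real.norm_eq_abs, abs_mul]
      calc |Bspline (n+1) v| * |I1 t| * |K (v+t)| ≤ 1 * 1 * C := by
            gcongr <;> [exact habs _ _; exact hI1abs t; exact hC _]
        _ = C := by ring
    · rw [Set.indicator_of_notMem hp]
      have hz : Bspline (n+1) v * I1 t = 0 := by
        by_cases ht : t ∈ Set.Icc (0:ℝ) 1
        · have hv : v ∉ Set.Icc (0:ℝ) ((n:ℝ)+1) := fun hv => hp (Set.mem_prod.2 ⟨ht, by exact_mod_cast hv⟩)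
          have h0 : Bspline (n+1) v = 0 := by
            apply Bspline_eq_zero
            simp only [Set.mem_Icc, not_and_or, not_le] at hv ⊢
            push_cast
            rcases hv with h | h
            · left; linarith
            · right; linarith
          rw [h0, zero_mul]
        · rw [Set.indicator_of_notMem ht, mul_zero]
      simp [Function.uncurry, hz]
  calc ∫ u, Bspline (n+2) u * K u
      = ∫ u, ∫ t, (Bspline (n+1) (u - t) * I1 t) * K u := by
        refine integral_congr_ae (Filter.Eventually.of_forall fun u => ?_)
        show Bspline (n+2) u * K u = _
        rw [show Bspline (n+2) u = ∫ t, Bspline (n+1) (u - t) * I1 t from rfl,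
          ← integral_mul_const]
    _ = ∫ t, ∫ u, (Bspline (n+1) (u - t) * I1 t) * K u := integral_integral_swap hint1
    _ = ∫ t, ∫ v, (Bspline (n+1) v * I1 t) * K (v + t) := by
        refine integral_congr_ae (Filter.Eventually.of_forall fun t => ?_)
        have := integral_add_right_eq_self (μ := volume)
          (fun v => (Bspline (n+1) (v - t) * I1 t) * K v) t
        simp only [add_sub_cancel_right] at this
        exact this.symm
    _ = ∫ v, ∫ t, (Bspline (n+1) v * I1 t) * K (v + t) := integral_integral_swap hint2
    _ = ∫ v, Bspline (n+1) v * ∫ s, I1 s * K (v + s) := by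
        refine integral_congr_ae (Filter.Eventually.of_forall fun v => ?_)
        show ∫ t, (Bspline (n+1) v * I1 t) * K (v + t) = _
        simp_rw [mul_assoc]
        exact integral_const_mul _ _

/-- convert an indicator-weighted integral to an interval integral -/
lemma ind_integral (W : ℝ → ℝ) : ∫ s, I1 s * W s = ∫ s in (0:ℝ)..1, W s := by
  rw [intervalIntegral.integral_of_le zero_le_one, ← integral_Icc_eq_integral_Ioc,
    ← integral_indicator measurableSet_Icc]
  congr 1
  funext s
  by_cases hs : s ∈ Set.Icc (0:ℝ) 1
  · simp [Set.indicator_of_mem hs]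
  · simp [Set.indicator_of_notMem hs]

/-- FTC step -/
lemma diff_eq_integral (F G : ℝ → ℝ) (hF : ∀ y, HasDerivAt F (G y) y) (hG : Continuous G)
    (y h : ℝ) : F (y + h) - F y = ∫ s, I1 s * (G (y + s * h) * h) := by
  rw [ind_integral]
  have h1 : ∀ s ∈ Set.uIcc (0:ℝ) 1, HasDerivAt (fun s : ℝ => F (y + s * h)) (G (y + s * h) * h) s := by
    intro s _
    have hin : HasDerivAt (fun s : ℝ => y + s * h) h s := by
      simpa using ((hasDerivAt_id s).mul_const h).const_add y
    exact (hF (y + s * h)).comp s hin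
  have h2 : IntervalIntegrable (fun s : ℝ => G (y + s * h) * h) volume 0 1 :=
    ((hG.comp (by continuity)).mul continuous_const).intervalIntegrable 0 1
  have := intervalIntegral.integral_eq_sub_of_hasDerivAt h1 h2
  simpa using this.symm

/-- For every `m`-times continuously differentiable `f : ℝ → ℝ` with bounded
derivatives, all `x, h ∈ ℝ`, and all `m ≥ 1`:
`Δ_h^m f x = ∫ B_m(t) f^(m)(x + t h) h^m dt`. -/
theorem finite_difference_Bspline_formula (m : ℕ) (hm : 1 ≤ m)
    (f : ℝ → ℝ) (hf : ContDiff ℝ m f)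
    (hbdd : ∀ k ≤ m, ∃ C : ℝ, ∀ x : ℝ, |iteratedDeriv k f x| ≤ C)
    (x h : ℝ) :
    ((fun (g : ℝ → ℝ) (y : ℝ) => g (y + h) - g y)^[m] f) x =
      ∫ t, Bspline m t * (iteratedDeriv m f (x + t * h) * h ^ m) := by
  induction m, hm using Nat.le_induction generalizing f with
  | base =>
    have hF : ∀ y, HasDerivAt f (iteratedDeriv 1 f y) y := by
      intro y
      rw [iteratedDeriv_one]
      exact ((hf.differentiable (by norm_num)) y).hasDerivAt
    have hG : Continuous (iteratedDeriv 1 f) := hf.continuous_iteratedDeriv 1 le_rfl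
    have := diff_eq_integral f (iteratedDeriv 1 f) hF hG x h
    simpa [Function.iterate_one, pow_one, Bspline] using this
  | succ n hn ih =>
    -- the difference function
    set g : ℝ → ℝ := fun y => f (y + h) - f y with hgdef
    have hshift : ContDiff ℝ (n+1 : ℕ) (fun y : ℝ => f (y + h)) :=
      hf.comp (contDiff_id.add contDiff_const)
    have hg : ContDiff ℝ (n : ℕ) g :=
      ((hshift.sub hf).of_le (by exact_mod_cast Nat.le_succ n))
    -- iterated derivatives of g
    have hder : ∀ k : ℕ, k ≤ n + 1 → ∀ y : ℝ,
        iteratedDeriv k g y = iteratedDeriv k f (y + h) - iteratedDeriv k f y := by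
      intro k hk y
      have hsub : iteratedDeriv k ((fun y : ℝ => f (y + h)) - f) y =
          iteratedDeriv k (fun y : ℝ => f (y + h)) y - iteratedDeriv k f y := by
        have h1 : ContDiffOn ℝ (k : ℕ) (fun y : ℝ => f (y + h)) Set.univ :=
          (hshift.of_le (by exact_mod_cast hk)).contDiffOn
        have h2 : ContDiffOn ℝ (k : ℕ) f Set.univ :=
          (hf.of_le (by exact_mod_cast hk)).contDiffOn
        have := iteratedDerivWithin_sub (Set.mem_univ y) uniqueDiffOn_univ (h1 y (Set.mem_univ y)) (h2 y (Set.mem_univ y))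
        simpa [iteratedDerivWithin_univ] using this
      have : iteratedDeriv k g y = iteratedDeriv k ((fun y : ℝ => f (y + h)) - f) y := rfl
      rw [this, hsub, iteratedDeriv_comp_add_const]
    -- bounded derivatives of g
    have hbddg : ∀ k ≤ n, ∃ C : ℝ, ∀ y : ℝ, |iteratedDeriv k g y| ≤ C := by
      intro k hk
      obtain ⟨C, hC⟩ := hbdd k (le_trans hk (Nat.le_succ n))
      refine ⟨C + C, fun y => ?_⟩
      rw [hder k (le_trans hk (Nat.le_succ n)) y]
      calc |iteratedDeriv k f (y + h) - iteratedDeriv k f y|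
          ≤ |iteratedDeriv k f (y + h)| + |iteratedDeriv k f y| := abs_sub _ _
        _ ≤ C + C := add_le_add (hC _) (hC _)
    -- apply IH
    have hIH := ih g hg hbddg
    -- LHS
    rw [Function.iterate_succ_apply]
    have hLHS : ((fun (g : ℝ → ℝ) (y : ℝ) => g (y + h) - g y)^[n]
        ((fun (g : ℝ → ℝ) (y : ℝ) => g (y + h) - g y) f)) x = 
        ((fun (g : ℝ → ℝ) (y : ℝ) => g (y + h) - g y)^[n] g) x := rfl
    rw [hLHS, hIH]
    -- now rewrite the integrand using FTC
    set G : ℝ → ℝ := iteratedDeriv (n+1) f with hGdef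
    have hGcont : Continuous G := hf.continuous_iteratedDeriv (n+1) le_rfl
    have hFd : ∀ y, HasDerivAt (iteratedDeriv n f) (G y) y := by
      intro y
      have hdiff : Differentiable ℝ (iteratedDeriv n f) :=
        hf.differentiable_iteratedDeriv n (by exact_mod_cast Nat.lt_succ_self n)
      have := (hdiff y).hasDerivAt
      rwa [show G y = deriv (iteratedDeriv n f) y from by rw [hGdef, iteratedDeriv_succ]]
    obtain ⟨C, hC⟩ := hbdd (n+1) le_rfl
    -- K bound
    set K : ℝ → ℝ := fun u => G (x + u * h) * h ^ (n+1) with hKdef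
    have hKm : Measurable K := ((hGcont.comp (by continuity)).measurable.mul_const _)
    have hKb : ∀ u, |K u| ≤ C * |h| ^ (n+1) := by
      intro u
      rw [hKdef]
      simp only [abs_mul, abs_pow]
      exact mul_le_mul_of_nonneg_right (hC _) (by positivity)
    -- n ≥ 1, so n = p + 1
    obtain ⟨p, rfl⟩ : ∃ p, n = p + 1 := ⟨n - 1, by omega⟩
    have hkey := key_swap p K hKm (C * |h| ^ (p+2)) hKb
    rw [show p + 1 + 1 = p + 2 from rfl] at *
    -- match both sides
    rw [hkey]
    refine integral_congr_ae (Filter.Eventually.of_forall fun t => ?_)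
    show Bspline (p+1) t * (iteratedDeriv (p+1) g (x + t * h) * h ^ (p+1)) = 
      Bspline (p+1) t * ∫ s, I1 s * K (t + s)
    congr 1
    rw [hder (p+1) (Nat.le_succ _) (x + t * h),
      diff_eq_integral (iteratedDeriv (p+1) f) G hFd hGcont (x + t * h) h]
    rw [← integral_mul_const]
    refine integral_congr_ae (Filter.Eventually.of_forall fun s => ?_)
    show (I1 s * (G (x + t * h + s * h) * h)) * h ^ (p+1) = I1 s * K (t + s)
    rw [hKdef]
    rw [show x + t * h + s * h = x + (t + s) * h by ring]
    ring
end
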